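/- If Banach spaces X and Y are not essentially incomparable, then there exist bounded operators U on X and V on Y that are Schur coupled but not Fredholm. -/

import Mathlib

/-!
For `S : X → Y` and `T : Y → X`, the operators `1 - T S` and `1 - S T` are the two Schur
complements of `[[1, T], [S, 1]]`. Their kernels and ranges determine each other:
`ker (1 - T S) = T (ker (1 - S T))` and `ran (1 - T S) = S⁻¹ (ran (1 - S T))`. Hence if `1 - S T`
were Fredholm, so would be `1 - T S`, and a pair `S`, `T` with `1 - T S` not Fredholm is exactly
what the failure of essential incomparability provides.
-/

open ContinuousLinearMap

variable {X Y : Type*} [NormedAddCommGroup X] [NormedSpace ℂ X]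
  [NormedAddCommGroup Y] [NormedSpace ℂ Y]

/-- A bounded operator is *Fredholm* if it has finite dimensional kernel and
closed range of finite codimension. -/
def IsFredholm (T : X →L[ℂ] Y) : Prop :=
  FiniteDimensional ℂ (LinearMap.ker (T : X →ₗ[ℂ] Y)) ∧ IsClosed (LinearMap.range (T : X →ₗ[ℂ] Y) : Set Y) ∧
    FiniteDimensional ℂ (Y ⧸ LinearMap.range (T : X →ₗ[ℂ] Y))

/-- The Fredholm index `dim ker − dim coker`. -/
noncomputable def fredholmIndex (T : X →L[ℂ] Y) : ℤ :=
  (Module.finrank ℂ (LinearMap.ker (T : X →ₗ[ℂ] Y)) : ℤ) - (Module.finrank ℂ (Y ⧸ LinearMap.range (T : X →ₗ[ℂ] Y)) : ℤ)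

/-- `S : X → Y` is *inessential* if `I_X − T S` is Fredholm for every bounded `T : Y → X`. -/
def Inessential (S : X →L[ℂ] Y) : Prop :=
  ∀ T : Y →L[ℂ] X, _root_.IsFredholm (ContinuousLinearMap.id ℂ X - T ∘L S)

/-- Banach spaces `X`, `Y` are *essentially incomparable* if every bounded operator
`X → Y` is inessential. -/
def EssentiallyIncomparable (X Y : Type*) [NormedAddCommGroup X] [NormedSpace ℂ X]
    [NormedAddCommGroup Y] [NormedSpace ℂ Y] : Prop :=
  ∀ S : X →L[ℂ] Y, Inessential S

/-- `U` and `V` are *Schur coupled* if they arise as the two Schur complements of a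
`2 × 2` block operator on `X × Y` with invertible diagonal entries. -/
def SchurCoupled (U : X →L[ℂ] X) (V : Y →L[ℂ] Y) : Prop :=
  ∃ (A : X ≃L[ℂ] X) (D : Y ≃L[ℂ] Y) (B : Y →L[ℂ] X) (C : X →L[ℂ] Y),
    U = (A : X →L[ℂ] X) - B ∘L (D.symm : Y →L[ℂ] Y) ∘L C ∧
    V = (D : Y →L[ℂ] Y) - C ∘L (A.symm : X →L[ℂ] X) ∘L B

namespace LinearMap

variable {R M N : Type*} [Ring R] [AddCommGroup M] [Module R M] [AddCommGroup N] [Module R N]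

theorem ker_id_sub_comp_eq_map (S : M →ₗ[R] N) (T : N →ₗ[R] M) :
    ker (id - T ∘ₗ S) = (ker (id - S ∘ₗ T)).map T := by
  ext x
  simp only [mem_ker, sub_apply, id_apply, comp_apply, Submodule.mem_map, sub_eq_zero]
  constructor
  · intro hx
    exact ⟨S x, by rw [← hx], hx.symm⟩
  · rintro ⟨y, hy, rfl⟩
    rw [← hy]

theorem range_id_sub_comp_eq_comap (S : M →ₗ[R] N) (T : N →ₗ[R] M) :
    range (id - T ∘ₗ S) = (range (id - S ∘ₗ T)).comap S := by
  ext x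
  simp only [mem_range, Submodule.mem_comap, sub_apply, id_apply, comp_apply]
  constructor
  · rintro ⟨z, rfl⟩
    exact ⟨S z, by rw [map_sub]⟩
  · rintro ⟨y, hy⟩
    exact ⟨x + T y, by rw [map_add, ← hy, sub_add_cancel, add_sub_cancel_right]⟩

end LinearMap

theorem Submodule.finiteDimensional_quotient_comap {K M N : Type*} [DivisionRing K]
    [AddCommGroup M] [Module K M] [AddCommGroup N] [Module K N]
    (f : M →ₗ[K] N) (p : Submodule K N) [FiniteDimensional K (N ⧸ p)] :
    FiniteDimensional K (M ⧸ p.comap f) := by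
  have hker : p.comap f = LinearMap.ker (p.mkQ ∘ₗ f) := by
    rw [LinearMap.ker_comp, ker_mkQ]
  exact .of_injective _ (LinearMap.ker_eq_bot.mp (ker_liftQ_eq_bot' _ _ hker))

theorem ContinuousLinearMap.coe_id_sub_comp {R M N : Type*} [Ring R]
    [TopologicalSpace M] [AddCommGroup M] [IsTopologicalAddGroup M] [Module R M]
    [TopologicalSpace N] [AddCommGroup N] [Module R N] (S : M →L[R] N) (T : N →L[R] M) :
    ((ContinuousLinearMap.id R M - T ∘L S : M →L[R] M) : M →ₗ[R] M) =
      LinearMap.id - (T : N →ₗ[R] M) ∘ₗ (S : M →ₗ[R] N) :=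
  rfl

theorem IsFredholm.id_sub_comp_comm {S : X →L[ℂ] Y} {T : Y →L[ℂ] X}
    (h : _root_.IsFredholm (ContinuousLinearMap.id ℂ Y - S ∘L T)) :
    _root_.IsFredholm (ContinuousLinearMap.id ℂ X - T ∘L S) := by
  obtain ⟨hker, hclosed, hcoker⟩ := h
  rw [coe_id_sub_comp] at hker hclosed hcoker
  rw [_root_.IsFredholm, coe_id_sub_comp, LinearMap.ker_id_sub_comp_eq_map,
    LinearMap.range_id_sub_comp_eq_comap]
  exact ⟨inferInstance, hclosed.preimage S.continuous,
    Submodule.finiteDimensional_quotient_comap _ _⟩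

theorem schurCoupled_id_sub_comp (S : X →L[ℂ] Y) (T : Y →L[ℂ] X) :
    SchurCoupled (ContinuousLinearMap.id ℂ X - T ∘L S) (ContinuousLinearMap.id ℂ Y - S ∘L T) :=
  ⟨.refl ℂ X, .refl ℂ Y, T, S, rfl, rfl⟩

theorem not_essIncomparable_schurCoupled_not_fredholm_general
    {X Y : Type*} [NormedAddCommGroup X] [NormedSpace ℂ X]
    [NormedAddCommGroup Y] [NormedSpace ℂ Y]
    (h : ¬ EssentiallyIncomparable X Y) :
    ∃ (U : X →L[ℂ] X) (V : Y →L[ℂ] Y),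
      SchurCoupled U V ∧ ¬ _root_.IsFredholm U ∧ ¬ _root_.IsFredholm V := by
  simp only [EssentiallyIncomparable, Inessential, not_forall] at h
  obtain ⟨S, T, hU⟩ := h
  exact ⟨_, _, schurCoupled_id_sub_comp S T, hU, fun hV => hU hV.id_sub_comp_comm⟩

theorem not_essIncomparable_schurCoupled_not_fredholm
    {X Y : Type*} [NormedAddCommGroup X] [NormedSpace ℂ X] [CompleteSpace X]
    [NormedAddCommGroup Y] [NormedSpace ℂ Y] [CompleteSpace Y]
    (h : ¬ EssentiallyIncomparable X Y) :
    ∃ (U : X →L[ℂ] X) (V : Y →L[ℂ] Y),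
      SchurCoupled U V ∧ ¬ _root_.IsFredholm U ∧ ¬ _root_.IsFredholm V :=
  not_essIncomparable_schurCoupled_not_fredholm_general h
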